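/- For n ≥ 1, at every point (x,t) where L_n(x,t) ≠ 0, the function u_n(x,t) = (∂_x L_n(x,t))/L_n(x,t) satisfies ∂u_n/∂t = x ∂²u_n/∂x² + 2 ∂u_n/∂x + u_n² + 2 x u_n ∂u_n/∂x. -/

import Mathlib

/-
Differentiating the defining sum term by term gives
∂ₜ ∂ₓᵏ L_n = n ∂ₓᵏ L_{n-1} = (k + 1) ∂ₓᵏ⁺¹ L_n + x ∂ₓᵏ⁺² L_n:
for k = 0 this is the heat equation ∂ₜ L = ∂ₓ(x ∂ₓ L), for k = 1 its x-derivative.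
For any F satisfying these two identities, the quotient rule expresses ∂ₜ, ∂ₓ, ∂ₓ² of
u = ∂ₓF / F through F, ∂ₓF, ∂ₓ²F, ∂ₓ³F, and both sides of the nonlinear equation become
the same rational function of these.
-/

noncomputable def L (n : ℕ) (x t : ℝ) : ℝ :=
  (n.factorial : ℝ) * ∑ r ∈ Finset.range (n + 1),
    t ^ (n - r) * x ^ r / (((n - r).factorial : ℝ) * ((r.factorial : ℝ)) ^ 2)

noncomputable def u (n : ℕ) (x t : ℝ) : ℝ := deriv (fun s => L n s t) x / L n x t

open Filter Topology Finset

section LogDeriv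

variable {𝕜 : Type*} [NontriviallyNormedField 𝕜] {f f' f'' : 𝕜 → 𝕜} {x a b : 𝕜}

theorem logDeriv_eq_div (hf : ∀ y, HasDerivAt f (f' y) y) : logDeriv f = fun y => f' y / f y := by
  ext y
  rw [logDeriv_apply, (hf y).deriv]

theorem hasDerivAt_logDeriv (hf : ∀ y, HasDerivAt f (f' y) y) (hf' : HasDerivAt f' a x)
    (hx : f x ≠ 0) : HasDerivAt (logDeriv f) ((a * f x - f' x ^ 2) / f x ^ 2) x := by
  rw [logDeriv_eq_div hf]
  exact (hf'.fun_div (hf x) hx).congr_deriv (by ring)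

theorem hasDerivAt_deriv_logDeriv (hf : ∀ y, HasDerivAt f (f' y) y)
    (hf' : ∀ y, HasDerivAt f' (f'' y) y) (hf'' : HasDerivAt f'' b x) (hx : f x ≠ 0) :
    HasDerivAt (deriv (logDeriv f))
      ((b * f x ^ 2 - 3 * f x * f' x * f'' x + 2 * f' x ^ 3) / f x ^ 3) x := by
  have hderiv : deriv (logDeriv f) =ᶠ[𝓝 x] fun y => (f'' y * f y - f' y ^ 2) / f y ^ 2 :=
    ((hf x).continuousAt.eventually_ne hx).mono fun y hy =>
      (hasDerivAt_logDeriv hf (hf' y) hy).deriv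
  refine ((hf''.fun_mul (hf x)).fun_sub ((hf' x).fun_pow 2)).fun_div ((hf x).fun_pow 2)
    (pow_ne_zero 2 hx) |>.congr_of_eventuallyEq hderiv |>.congr_deriv ?_
  field_simp
  ring

end LogDeriv

theorem logDeriv_solves_nonlinear_of_laguerreHeat {𝕜 : Type*} [NontriviallyNormedField 𝕜]
    {F F₁ F₂ : 𝕜 → 𝕜 → 𝕜} {x t F₃ : 𝕜}
    (hF₁ : ∀ y s, HasDerivAt (F · s) (F₁ y s) y) (hF₂ : ∀ y, HasDerivAt (F₁ · t) (F₂ y t) y)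
    (hF₃ : HasDerivAt (F₂ · t) F₃ x) (heat : HasDerivAt (F x ·) (F₁ x t + x * F₂ x t) t)
    (heat₁ : HasDerivAt (F₁ x ·) (2 * F₂ x t + x * F₃) t) (hF : F x t ≠ 0) :
    deriv (fun s => logDeriv (F · s) x) t =
      x * deriv (deriv (logDeriv (F · t))) x + 2 * deriv (logDeriv (F · t)) x
        + logDeriv (F · t) x ^ 2 + 2 * x * logDeriv (F · t) x * deriv (logDeriv (F · t)) x := by
  have htime : (fun s => logDeriv (F · s) x) = fun s => F₁ x s / F x s := by
    ext s
    rw [logDeriv_eq_div (hF₁ · s)]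
  rw [htime, (heat₁.fun_div heat hF).deriv, (hasDerivAt_logDeriv (hF₁ · t) (hF₂ x) hF).deriv,
    (hasDerivAt_deriv_logDeriv (hF₁ · t) hF₂ hF₃ hF).deriv, logDeriv_eq_div (hF₁ · t)]
  field_simp
  ring

noncomputable def iterDerivL (k n : ℕ) (x t : ℝ) : ℝ :=
  (n.factorial : ℝ) * ∑ r ∈ range (n + 1),
    t ^ (n - r) * ((r.descFactorial k : ℝ) * x ^ (r - k)) /
      (((n - r).factorial : ℝ) * ((r.factorial : ℝ)) ^ 2)

theorem iterDerivL_zero (n : ℕ) : iterDerivL 0 n = L n := by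
  ext x t
  simp [iterDerivL, L]

theorem hasDerivAt_iterDerivL (k n : ℕ) (x t : ℝ) :
    HasDerivAt (iterDerivL k n · t) (iterDerivL (k + 1) n x t) x := by
  refine .const_mul _ (.fun_sum fun r _ => ?_)
  refine ((((hasDerivAt_pow (r - k) x).const_mul (r.descFactorial k : ℝ)).const_mul
    (t ^ (n - r))).div_const _).congr_deriv ?_
  rw [Nat.descFactorial_succ, Nat.sub_sub]
  push_cast
  ring

theorem hasDerivAt_iterDerivL_time (k n : ℕ) (x t : ℝ) :
    HasDerivAt (iterDerivL k n x ·) (n * iterDerivL k (n - 1) x t) t := by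
  refine (HasDerivAt.const_mul _ (.fun_sum fun r _ =>
    ((hasDerivAt_pow (n - r) t).mul_const _).div_const _)).congr_deriv ?_
  rcases n with _ | m
  · simp
  rw [sum_range_succ, Nat.add_sub_cancel, iterDerivL]
  simp only [Nat.sub_self, Nat.cast_zero, zero_mul, zero_div, add_zero, mul_sum]
  refine sum_congr rfl fun r hrm => ?_
  have hr : r ≤ m := Nat.lt_succ_iff.mp (mem_range.mp hrm)
  rw [Nat.succ_sub hr, Nat.factorial_succ, Nat.factorial_succ, Nat.succ_sub_one]
  push_cast
  field_simp

-- Euler's identity x ∂ₓ(∂ₓᵏ xʳ) = (r - k) ∂ₓᵏ xʳ, in a form free of truncated subtraction.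
theorem descFactorial_mul_pow_euler (r k : ℕ) (x : ℝ) :
    (k + 1) * ((r.descFactorial k : ℝ) * x ^ (r - k)) +
        x * ((r.descFactorial (k + 1) : ℝ) * x ^ (r - (k + 1))) =
      (r + 1) * ((r.descFactorial k : ℝ) * x ^ (r - k)) := by
  rcases lt_or_ge r k with h | h
  · simp [Nat.descFactorial_eq_zero_iff_lt.mpr h]
  obtain ⟨j, rfl⟩ := Nat.exists_eq_add_of_le h
  rcases j with _ | j
  · simp [Nat.descFactorial_succ]
  rw [Nat.descFactorial_succ, show k + (j + 1) - (k + 1) = j by omega,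
    show k + (j + 1) - k = j + 1 by omega]
  push_cast
  ring

theorem natCast_mul_iterDerivL_pred (k n : ℕ) (x t : ℝ) :
    n * iterDerivL k (n - 1) x t =
      (k + 1) * iterDerivL (k + 1) n x t + x * iterDerivL (k + 2) n x t := by
  rcases n with _ | m
  · simp [iterDerivL, Nat.descFactorial_succ]
  rw [iterDerivL, iterDerivL, iterDerivL, sum_range_succ' (M := ℝ) _ (m + 1),
    sum_range_succ' (M := ℝ) _ (m + 1)]
  simp only [Nat.add_sub_cancel, Nat.zero_descFactorial_succ, Nat.cast_zero, zero_mul, mul_zero,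
    zero_div, add_zero, mul_sum]
  rw [← sum_add_distrib]
  refine sum_congr rfl fun r _ => ?_
  rw [Nat.succ_descFactorial_succ, Nat.succ_descFactorial_succ, Nat.add_sub_add_right,
    Nat.add_sub_add_right, show r + 1 - (k + 2) = r - (k + 1) by omega, Nat.factorial_succ,
    Nat.factorial_succ]
  push_cast
  field_simp
  linear_combination -(t ^ (m - r)) * descFactorial_mul_pow_euler r k x

theorem iterDerivL_laguerreHeat (k n : ℕ) (x t : ℝ) :
    HasDerivAt (iterDerivL k n x ·)
      ((k + 1) * iterDerivL (k + 1) n x t + x * iterDerivL (k + 2) n x t) t :=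
  natCast_mul_iterDerivL_pred k n x t ▸ hasDerivAt_iterDerivL_time k n x t

theorem laguerre_ratio_solves_nonlinear_general (n : ℕ) (x t : ℝ)
    (h : L n x t ≠ 0) :
    deriv (fun s => u n x s) t =
      x * deriv (deriv (fun s => u n s t)) x + 2 * deriv (fun s => u n s t) x
        + (u n x t) ^ 2 + 2 * x * u n x t * deriv (fun s => u n s t) x := by
  have hL₁ (x t : ℝ) : HasDerivAt (L n · t) (iterDerivL 1 n x t) x :=
    iterDerivL_zero n ▸ hasDerivAt_iterDerivL 0 n x t
  have heat : HasDerivAt (L n x ·) (iterDerivL 1 n x t + x * iterDerivL 2 n x t) t := by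
    simpa [iterDerivL_zero] using iterDerivL_laguerreHeat 0 n x t
  have heat₁ : HasDerivAt (iterDerivL 1 n x ·)
      (2 * iterDerivL 2 n x t + x * iterDerivL 3 n x t) t := by
    simpa [one_add_one_eq_two] using iterDerivL_laguerreHeat 1 n x t
  exact logDeriv_solves_nonlinear_of_laguerreHeat hL₁ (hasDerivAt_iterDerivL 1 n · t)
    (hasDerivAt_iterDerivL 2 n x t) heat heat₁ h

theorem laguerre_ratio_solves_nonlinear (n : ℕ) (hn : 1 ≤ n) (x t : ℝ)
    (h : L n x t ≠ 0) :
    deriv (fun s => u n x s) t =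
      x * deriv (deriv (fun s => u n s t)) x + 2 * deriv (fun s => u n s t) x
        + (u n x t) ^ 2 + 2 * x * u n x t * deriv (fun s => u n s t) x :=
  laguerre_ratio_solves_nonlinear_general n x t h
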